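/- Let T be a one-dimensional subspace of a finite-dimensional hermitian vector space E, and let W be a k-dimensional subspace with W ∩ T = 0. Then the minimum over all k-dimensional subspaces W' with W' ∩ T ≠ 0 of the projection distance d_p(W, W') equals sin ∠_min(W, T). -/

import Mathlib

/-!
Write `T = ℂ ∙ t` with `‖t‖ = 1` and `p = P_W t`; then `sin ∠_min(W, T) = √(1 - ‖p‖²) = ‖t - p‖`.
If `t ∈ W'`, then `(P_W - P_W') t = p - t`, which gives the lower bound `‖t - p‖ ≤ d_p(W, W')`.
For the upper bound take a unit `w ∈ W` with `p ∈ ℂ ∙ w`, and `W' = U ⊕ ℂ ∙ t` where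
`U = W ⊖ ℂ ∙ w`. Since `t ⟂ U`, `P_W - P_W' = P_w - P_t`, a self-adjoint operator `A` with
`A³ = (1 - |⟪w, t⟫|²) A`; the C⋆-identity then gives `‖A‖² ≤ 1 - |⟪w, t⟫|² = 1 - ‖p‖²`.
-/

open Module

noncomputable section

variable {n : ℕ}

/-- The orthogonal projection onto a subspace, as an endomorphism. -/
noncomputable def proj (V : Submodule ℂ (EuclideanSpace ℂ (Fin n))) :
    EuclideanSpace ℂ (Fin n) →L[ℂ] EuclideanSpace ℂ (Fin n) :=
  V.subtypeL.comp V.orthogonalProjection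

/-- The projection distance between two subspaces. -/
noncomputable def dp (V1 V2 : Submodule ℂ (EuclideanSpace ℂ (Fin n))) : ℝ :=
  ‖proj V1 - proj V2‖

/-- The minimum angle between two subspaces. -/
noncomputable def minAngle (V1 V2 : Submodule ℂ (EuclideanSpace ℂ (Fin n))) : ℝ :=
  sInf {θ | ∃ v1 ∈ V1, v1 ≠ 0 ∧ ∃ v2 ∈ V2, v2 ≠ 0 ∧
    θ = Real.arccos (‖(inner ℂ v1 v2 : ℂ)‖ / (‖v1‖ * ‖v2‖))}

open scoped InnerProductSpace
open Submodule

theorem IsSelfAdjoint.sq_norm_le_of_pow_three_eq_smul {𝕜 A : Type*} [NormedField 𝕜]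
    [NormedRing A] [StarRing A] [CStarRing A] [NormedAlgebra 𝕜 A] {a : A}
    (ha : IsSelfAdjoint a) {c : 𝕜} (h : a ^ 3 = c • a) : ‖a‖ ^ 2 ≤ ‖c‖ := by
  have h4 : ‖a‖ ^ 4 = ‖c‖ * ‖a‖ ^ 2 := by
    calc ‖a‖ ^ 4 = ‖a ^ 4‖ := by simpa using (ha.norm_pow_two_pow 2).symm
      _ = ‖c • (a * a)‖ := by rw [pow_succ, h, smul_mul_assoc]
      _ = ‖c‖ * ‖a‖ ^ 2 := by rw [norm_smul, ha.norm_mul_self]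
  nlinarith [sq_nonneg ‖a‖, norm_nonneg c, sq_nonneg (‖a‖ ^ 2 - ‖c‖)]

section InnerProductSpace

variable {𝕜 E : Type*} [RCLike 𝕜] [NormedAddCommGroup E] [InnerProductSpace 𝕜 E]

namespace Submodule

theorem inner_starProjection_eq_of_mem_left (K : Submodule 𝕜 E) [K.HasOrthogonalProjection]
    {v : E} (hv : v ∈ K) (x : E) : ⟪v, K.starProjection x⟫_𝕜 = ⟪v, x⟫_𝕜 := by
  rw [← inner_starProjection_left_eq_right, starProjection_eq_self_iff.2 hv]

theorem norm_sub_starProjection_eq_sqrt (K : Submodule 𝕜 E) [K.HasOrthogonalProjection]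
    (x : E) : ‖x - K.starProjection x‖ = √(‖x‖ ^ 2 - ‖K.starProjection x‖ ^ 2) := by
  rw [norm_sq_eq_add_norm_sq_starProjection x K, starProjection_orthogonal_val,
    add_sub_cancel_left, Real.sqrt_sq (norm_nonneg _)]

theorem IsOrtho.starProjection_sup {U V : Submodule 𝕜 E} [U.HasOrthogonalProjection]
    [V.HasOrthogonalProjection] [(U ⊔ V).HasOrthogonalProjection] (h : U ⟂ V) :
    (U ⊔ V).starProjection = U.starProjection + V.starProjection := by
  ext x
  rw [add_apply]
  refine eq_starProjection_of_mem_of_inner_eq_zero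
    (add_mem (mem_sup_left (U.starProjection_apply_mem x))
      (mem_sup_right (V.starProjection_apply_mem x))) fun y hy => ?_
  obtain ⟨u, hu, v, hv, rfl⟩ := mem_sup.1 hy
  have hUv : ⟪U.starProjection x, v⟫_𝕜 = 0 := h.inner_eq (U.starProjection_apply_mem x) hv
  have hVu : ⟪V.starProjection x, u⟫_𝕜 = 0 := h.symm.inner_eq (V.starProjection_apply_mem x) hu
  have hu' := U.starProjection_inner_eq_zero x u hu
  have hv' := V.starProjection_inner_eq_zero x v hv
  simp only [inner_sub_left, inner_add_left, inner_add_right] at hu' hv' ⊢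
  linear_combination hu' + hv' - hUv - hVu

theorem exists_norm_eq_one_mem_span_singleton {K : Submodule 𝕜 E} (hK : K ≠ ⊥) {p : E}
    (hp : p ∈ K) : ∃ w ∈ K, ‖w‖ = 1 ∧ p ∈ 𝕜 ∙ w := by
  rcases eq_or_ne p 0 with rfl | hp0
  · obtain ⟨v, hvK, hv0⟩ := exists_mem_ne_zero_of_ne_bot hK
    exact ⟨(‖v‖⁻¹ : 𝕜) • v, smul_mem _ _ hvK, norm_smul_inv_norm hv0, zero_mem _⟩
  · refine ⟨(‖p‖⁻¹ : 𝕜) • p, smul_mem _ _ hp, norm_smul_inv_norm hp0, ?_⟩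
    rw [span_singleton_smul_eq (by simpa using hp0)]
    exact mem_span_singleton_self p

theorem norm_inner_eq_norm_starProjection (K : Submodule 𝕜 E) [K.HasOrthogonalProjection]
    {w x : E} (hwK : w ∈ K) (hw : ‖w‖ = 1) (hx : K.starProjection x ∈ 𝕜 ∙ w) :
    ‖⟪w, x⟫_𝕜‖ = ‖K.starProjection x‖ := by
  obtain ⟨a, ha⟩ := mem_span_singleton.1 hx
  rw [← K.inner_starProjection_eq_of_mem_left hwK, ← ha, inner_smul_right, norm_smul]
  simp [hw]

theorem exists_norm_eq_one_eq_span_singleton {T : Submodule 𝕜 E} (hT : finrank 𝕜 T = 1) :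
    ∃ t : E, ‖t‖ = 1 ∧ T = 𝕜 ∙ t := by
  have hT0 : T ≠ ⊥ := by rintro rfl; simp at hT
  obtain ⟨t, htT, ht, -⟩ := exists_norm_eq_one_mem_span_singleton hT0 (zero_mem T)
  exact ⟨t, ht, eq_span_singleton_of_mem_of_finrank_eq_one hT htT (by rintro rfl; simp at ht)⟩

end Submodule

theorem starProjection_span_singleton_sub_pow_three {w t : E} (hw : ‖w‖ = 1) (ht : ‖t‖ = 1) :
    ((𝕜 ∙ w).starProjection - (𝕜 ∙ t).starProjection) ^ 3 =
      ((1 - ‖⟪w, t⟫_𝕜‖ ^ 2 : ℝ) : 𝕜) • ((𝕜 ∙ w).starProjection - (𝕜 ∙ t).starProjection) := by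
  set A := (𝕜 ∙ w).starProjection - (𝕜 ∙ t).starProjection
  have hA (x : E) : A x = ⟪w, x⟫_𝕜 • w - ⟪t, x⟫_𝕜 • t := by
    simp [A, starProjection_unit_singleton 𝕜 hw, starProjection_unit_singleton 𝕜 ht]
  have hww : ⟪w, w⟫_𝕜 = 1 := by simp [hw]
  have htt : ⟪t, t⟫_𝕜 = 1 := by simp [ht]
  have hc : ((1 - ‖⟪w, t⟫_𝕜‖ ^ 2 : ℝ) : 𝕜) = 1 - ⟪t, w⟫_𝕜 * ⟪w, t⟫_𝕜 := by
    rw [← inner_conj_symm t w, RCLike.conj_mul]; push_cast; ring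
  have hAAw : A (A w) = ((1 - ‖⟪w, t⟫_𝕜‖ ^ 2 : ℝ) : 𝕜) • w := by
    simp only [hA, inner_sub_right, inner_smul_right, hww, htt, hc]
    match_scalars <;> ring
  have hAAt : A (A t) = ((1 - ‖⟪w, t⟫_𝕜‖ ^ 2 : ℝ) : 𝕜) • t := by
    simp only [hA, inner_sub_right, inner_smul_right, hww, htt, hc]
    match_scalars <;> ring
  ext x
  change A (A (A x)) = _
  rw [hA x, map_sub, map_smul, map_smul, map_sub, map_smul, map_smul, hAAw, hAAt,
    smul_apply, hA x, smul_sub, smul_comm _ ⟪w, x⟫_𝕜, smul_comm _ ⟪t, x⟫_𝕜]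

theorem sq_norm_starProjection_span_singleton_sub_le [CompleteSpace E] {w t : E}
    (hw : ‖w‖ = 1) (ht : ‖t‖ = 1) :
    ‖(𝕜 ∙ w).starProjection - (𝕜 ∙ t).starProjection‖ ^ 2 ≤ 1 - ‖⟪w, t⟫_𝕜‖ ^ 2 := by
  have hwt : ‖⟪w, t⟫_𝕜‖ ≤ 1 := by simpa [hw, ht] using norm_inner_le_norm (𝕜 := 𝕜) w t
  have hc : ‖((1 - ‖⟪w, t⟫_𝕜‖ ^ 2 : ℝ) : 𝕜)‖ = 1 - ‖⟪w, t⟫_𝕜‖ ^ 2 := by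
    rw [RCLike.norm_ofReal, abs_of_nonneg (by nlinarith [norm_nonneg ⟪w, t⟫_𝕜])]
  rw [← hc]
  exact ((isSelfAdjoint_starProjection _).sub (isSelfAdjoint_starProjection _))
    |>.sq_norm_le_of_pow_three_eq_smul (starProjection_span_singleton_sub_pow_three hw ht)

theorem exists_finrank_eq_mem_sq_norm_starProjection_sub_le [FiniteDimensional 𝕜 E]
    {W : Submodule 𝕜 E} (hW : W ≠ ⊥) {t : E} (ht : ‖t‖ = 1) (htW : t ∉ W) :
    ∃ W' : Submodule 𝕜 E, finrank 𝕜 W' = finrank 𝕜 W ∧ t ∈ W' ∧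
      ‖W.starProjection - W'.starProjection‖ ^ 2 ≤ 1 - ‖W.starProjection t‖ ^ 2 := by
  have := FiniteDimensional.complete 𝕜 E
  obtain ⟨w, hwW, hw, hpw⟩ :=
    exists_norm_eq_one_mem_span_singleton hW (W.starProjection_apply_mem t)
  have hwW' : 𝕜 ∙ w ≤ W := (span_singleton_le_iff_mem w W).2 hwW
  have hrankU := finrank_add_inf_finrank_orthogonal hwW'
  have hUW : (𝕜 ∙ w) ⊔ (𝕜 ∙ w)ᗮ ⊓ W = W := sup_orthogonal_inf_of_hasOrthogonalProjection hwW'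
  have hwU : (𝕜 ∙ w) ⟂ (𝕜 ∙ w)ᗮ ⊓ W := (isOrtho_iff_le.2 inf_le_left).symm
  have htU : (𝕜 ∙ w)ᗮ ⊓ W ⟂ (𝕜 ∙ t) := by
    refine isOrtho_iff_le.2 fun u hu => mem_orthogonal_singleton_iff_inner_right.2 ?_
    rw [← inner_conj_symm, ← W.inner_starProjection_eq_of_mem_left hu.2,
      inner_left_of_mem_orthogonal hpw hu.1, map_zero]
  have htU' : t ∉ (𝕜 ∙ w)ᗮ ⊓ W := fun h => htW h.2
  generalize (𝕜 ∙ w)ᗮ ⊓ W = U at hrankU hUW hwU htU htU'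
  have ht0 : t ≠ 0 := ne_zero_of_norm_ne_zero (ht ▸ one_ne_zero)
  have hrank : finrank 𝕜 (U ⊔ (𝕜 ∙ t) : Submodule 𝕜 E) = finrank 𝕜 W := by
    have h := finrank_sup_add_finrank_inf_eq U (𝕜 ∙ t)
    rw [disjoint_iff.1 ((disjoint_span_singleton' ht0).2 htU'), finrank_bot,
      finrank_span_singleton ht0] at h
    rw [finrank_span_singleton (ne_zero_of_norm_ne_zero (hw ▸ one_ne_zero))] at hrankU
    omega
  have hdiff : W.starProjection - (U ⊔ (𝕜 ∙ t)).starProjection =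
      (𝕜 ∙ w).starProjection - (𝕜 ∙ t).starProjection := by
    subst hUW
    rw [hwU.starProjection_sup, htU.starProjection_sup, add_comm, add_sub_add_left_eq_sub]
  refine ⟨U ⊔ (𝕜 ∙ t), hrank, mem_sup_right (mem_span_singleton_self t), ?_⟩
  rw [hdiff, ← W.norm_inner_eq_norm_starProjection hwW hw hpw]
  exact sq_norm_starProjection_span_singleton_sub_le hw ht

end InnerProductSpace

theorem norm_sub_starProjection_le_dp {W W' : Submodule ℂ (EuclideanSpace ℂ (Fin n))}
    {x : EuclideanSpace ℂ (Fin n)} (hx : x ∈ W') :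
    ‖x - W.starProjection x‖ ≤ dp W W' * ‖x‖ := by
  calc ‖x - W.starProjection x‖ = ‖(proj W - proj W') x‖ := by
        rw [norm_sub_rev]
        change _ = ‖W.starProjection x - W'.starProjection x‖
        rw [starProjection_eq_self_iff.2 hx]
    _ ≤ dp W W' * ‖x‖ := (proj W - proj W').le_opNorm x

theorem minAngle_span_singleton {W : Submodule ℂ (EuclideanSpace ℂ (Fin n))} (hW : W ≠ ⊥)
    {t : EuclideanSpace ℂ (Fin n)} (ht : ‖t‖ = 1) :
    minAngle W (ℂ ∙ t) = Real.arccos ‖W.starProjection t‖ := by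
  obtain ⟨w, hwW, hw, hpw⟩ :=
    exists_norm_eq_one_mem_span_singleton hW (W.starProjection_apply_mem t)
  refine IsLeast.csInf_eq ⟨⟨w, hwW, ne_zero_of_norm_ne_zero (hw ▸ one_ne_zero), t,
    mem_span_singleton_self t, ne_zero_of_norm_ne_zero (ht ▸ one_ne_zero), ?_⟩, ?_⟩
  · rw [W.norm_inner_eq_norm_starProjection hwW hw hpw, hw, ht, mul_one, div_one]
  · rintro θ ⟨v, hv, hv0, u, hu, hu0, rfl⟩
    obtain ⟨d, rfl⟩ := mem_span_singleton.1 hu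
    apply Real.arccos_le_arccos
    rw [inner_smul_right, norm_mul, norm_smul, ht, mul_one, mul_comm ‖v‖,
      mul_div_mul_left _ _ (norm_ne_zero_iff.2 (left_ne_zero_of_smul hu0)),
      div_le_iff₀ (norm_pos_iff.2 hv0), ← W.inner_starProjection_eq_of_mem_left hv, mul_comm]
    exact norm_inner_le_norm _ _

/-- for a line `T` and a `k`-dimensional subspace `W` with `W ∩ T = 0`,
the minimum of `d_p(W, W')` over the `k`-dimensional subspaces `W'` with `W' ∩ T ≠ 0`
equals `sin ∠_min(W, T)`. -/
theorem dist_to_schubert_eq_sin_minAngle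
    (k : ℕ) (hk : 1 ≤ k) (T W : Submodule ℂ (EuclideanSpace ℂ (Fin n)))
    (hT : finrank ℂ T = 1) (hW : finrank ℂ W = k) (hWT : W ⊓ T = ⊥) :
    IsLeast {d | ∃ W' : Submodule ℂ (EuclideanSpace ℂ (Fin n)),
        finrank ℂ W' = k ∧ W' ⊓ T ≠ ⊥ ∧ d = dp W W'}
      (Real.sin (minAngle W T)) := by
  obtain ⟨t, ht, rfl⟩ := exists_norm_eq_one_eq_span_singleton hT
  have ht0 : t ≠ 0 := ne_zero_of_norm_ne_zero (ht ▸ one_ne_zero)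
  have hmeet (V : Submodule ℂ (EuclideanSpace ℂ (Fin n))) : V ⊓ (ℂ ∙ t) ≠ ⊥ ↔ t ∈ V := by
    rw [Ne, ← disjoint_iff, disjoint_span_singleton' ht0, not_not]
  have hW0 : W ≠ ⊥ := by rintro rfl; simp at hW; omega
  have htW : t ∉ W := fun h => (hmeet W).2 h hWT
  have hdist := W.norm_sub_starProjection_eq_sqrt t
  rw [ht, one_pow] at hdist
  rw [minAngle_span_singleton hW0 ht, Real.sin_arccos, ← hdist]
  obtain ⟨W', hW'k, htW', hle⟩ := exists_finrank_eq_mem_sq_norm_starProjection_sub_le hW0 ht htW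
  have hlower (V : Submodule ℂ (EuclideanSpace ℂ (Fin n))) (hV : t ∈ V) :
      ‖t - W.starProjection t‖ ≤ dp W V := by
    simpa [ht] using norm_sub_starProjection_le_dp (W := W) hV
  refine ⟨⟨W', hW'k.trans hW, (hmeet W').2 htW', le_antisymm (hlower W' htW') ?_⟩, ?_⟩
  · rw [hdist]; exact Real.le_sqrt_of_sq_le hle
  · rintro _ ⟨V, -, hV, rfl⟩
    exact hlower V ((hmeet V).1 hV)

end
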